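/- arXiv:1110.0458 — 3 statements merged into one kernel-verified Lean document; each statement's English description precedes it below -/
import Mathlib

section
/- The operators ρ_w on the tensor algebra, defined by ρ_1 = id and ρ_w(a₁⊗...⊗a_w) = ρ_{w-1}(a₁⊗...⊗a_{w-1}) ⊗ a_w − ρ_{w-1}(a₂⊗...⊗a_w) ⊗ a₁, satisfy the identity w·(a₁⊗...⊗a_w) = ∑_{k=0}^{w-1} (a₁⊗...⊗a_k) ⧢ ρ_{w-k}(a_{k+1}⊗...⊗a_w), where ⧢ denotes the shuffle product and the k=0 term is ρ_w(a₁⊗...⊗a_w). -/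
/- We model the weight-graded tensor algebra of a `ℚ`-vector space with basis `V`
as the free `ℚ`-module on words `List V`; elementary tensors are single words. -/

/-- Prepend a letter to every word (linear "a ⊗ -"). -/
noncomputable def consL {V : Type*} (a : V) (x : List V →₀ ℚ) : List V →₀ ℚ :=
  Finsupp.mapDomain (fun l => a :: l) x

/-- Append a letter to every word (linear "- ⊗ a"). -/
noncomputable def appR {V : Type*} (a : V) (x : List V →₀ ℚ) : List V →₀ ℚ :=
  Finsupp.mapDomain (fun l => l ++ [a]) x

/-- The shuffle product of two elementary tensors (words). -/
noncomputable def shuffle {V : Type*} : List V → List V → (List V →₀ ℚ)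
  | [], v => Finsupp.single v 1
  | a :: u, [] => Finsupp.single (a :: u) 1
  | a :: u, b :: v => consL a (shuffle u (b :: v)) + consL b (shuffle (a :: u) v)
  termination_by u v => u.length + v.length

/-- The Dynkin-type operator `ρ` on elementary tensors:
`ρ₁ = id` and `ρ_w(a₁⊗…⊗a_w) = ρ_{w-1}(a₁⊗…⊗a_{w-1}) ⊗ a_w − ρ_{w-1}(a₂⊗…⊗a_w) ⊗ a₁`. -/
noncomputable def rho {V : Type*} : List V → (List V →₀ ℚ)
  | [] => 0
  | [a] => Finsupp.single [a] 1
  | a :: b :: l =>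
      appR ((b :: l).getLast (List.cons_ne_nil _ _)) (rho (a :: (b :: l).dropLast))
        - appR a (rho (b :: l))
  termination_by l => l.length
  decreasing_by all_goals simp [List.length_dropLast]

/-- Linear extension of `ρ`. -/
noncomputable def rhoL {V : Type*} (x : List V →₀ ℚ) : List V →₀ ℚ :=
  x.sum fun l c => c • rho l


/-- Bilinear extension of the shuffle product. -/
noncomputable def shMul {V : Type*} (x y : List V →₀ ℚ) : List V →₀ ℚ :=
  x.sum fun u c => y.sum fun v d => (c * d) • shuffle u v

/- Put `T(u, s) = ∑ₖ (u ++ s₁…sₖ) ⧢ ρ(sₖ₊₁…)`, so that the right-hand side is `T([], l)`.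
For `l = m ++ [a]`, unfold `ρ(d s a) = ρ(d s)·a − ρ(s a)·d` in every summand and expand each
shuffle by the recursion on last letters, `(u b) ⧢ (v c) = ((u b) ⧢ v)·c + (u ⧢ (v c))·b`.
The terms ending in a letter of `m` telescope, leaving `T([], m ++ [a]) = T([], m)·a + m a`,
and the factor `|l|` follows by induction on `l`. -/

section Ree

variable {V : Type*}

theorem shuffle_nil_right (u : List V) : shuffle u [] = Finsupp.single u 1 := by
  cases u <;> rw [shuffle]

theorem consL_single (a : V) (u : List V) (d : ℚ) :
    consL a (Finsupp.single u d) = Finsupp.single (a :: u) d :=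
  Finsupp.mapDomain_single

theorem appR_single (a : V) (u : List V) (d : ℚ) :
    appR a (Finsupp.single u d) = Finsupp.single (u ++ [a]) d :=
  Finsupp.mapDomain_single

theorem consL_add (a : V) (x y : List V →₀ ℚ) : consL a (x + y) = consL a x + consL a y :=
  Finsupp.mapDomain_add

theorem appR_add (a : V) (x y : List V →₀ ℚ) : appR a (x + y) = appR a x + appR a y :=
  Finsupp.mapDomain_add

theorem appR_sub (a : V) (x y : List V →₀ ℚ) : appR a (x - y) = appR a x - appR a y :=
  Finsupp.mapDomain_sub

theorem appR_smul (a : V) (r : ℚ) (x : List V →₀ ℚ) : appR a (r • x) = r • appR a x :=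
  Finsupp.mapDomain_smul r x

theorem appR_zero (a : V) : appR a (0 : List V →₀ ℚ) = 0 :=
  Finsupp.mapDomain_zero

theorem consL_appR (a b : V) (x : List V →₀ ℚ) : consL a (appR b x) = appR b (consL a x) := by
  simp only [consL, appR, ← Finsupp.mapDomain_comp]
  rfl

theorem shuffle_cons_cons (a b : V) (u v : List V) :
    shuffle (a :: u) (b :: v) = consL a (shuffle u (b :: v)) + consL b (shuffle (a :: u) v) := by
  rw [shuffle]

theorem shuffle_concat_concat (u v : List V) (b c : V) :
    shuffle (u ++ [b]) (v ++ [c]) =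
      appR c (shuffle (u ++ [b]) v) + appR b (shuffle u (v ++ [c])) := by
  match u, v with
  | [], [] =>
    simp [shuffle, consL_single, appR_single]
  | a :: u, [] =>
    have ih := shuffle_concat_concat u [] b c
    simp only [List.nil_append, List.cons_append] at ih ⊢
    rw [shuffle_cons_cons, ih, shuffle_cons_cons]
    simp only [shuffle_nil_right, appR_single, List.append_assoc, List.cons_append,
      List.nil_append, consL_add, consL_single, consL_appR, appR_add]
    abel
  | [], d :: v =>
    have ih := shuffle_concat_concat [] v b c
    simp only [List.nil_append, List.cons_append] at ih ⊢
    rw [shuffle_cons_cons, ih, shuffle_cons_cons]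
    simp only [shuffle, consL_single, appR_single, List.append_assoc, List.cons_append,
      List.nil_append, consL_add, consL_appR, appR_add]
    abel
  | a :: u, d :: v =>
    have ih₁ := shuffle_concat_concat u (d :: v) b c
    have ih₂ := shuffle_concat_concat (a :: u) v b c
    simp only [List.cons_append] at ih₁ ih₂ ⊢
    rw [shuffle_cons_cons, ih₁, ih₂, shuffle_cons_cons a d (u ++ [b]) v,
      shuffle_cons_cons a d u (v ++ [c])]
    simp only [consL_add, appR_add, consL_appR]
    abel
  termination_by u.length + v.length

noncomputable def shuffleLeft (u : List V) : (List V →₀ ℚ) →ₗ[ℚ] List V →₀ ℚ :=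
  Finsupp.lsum ℚ fun v => LinearMap.toSpanSingleton ℚ _ (shuffle u v)

theorem shuffleLeft_single (u v : List V) (d : ℚ) :
    shuffleLeft u (Finsupp.single v d) = d • shuffle u v := by
  rw [shuffleLeft, Finsupp.lsum_single, LinearMap.toSpanSingleton_apply]

theorem shMul_single_one (u : List V) (y : List V →₀ ℚ) :
    shMul (Finsupp.single u 1) y = shuffleLeft u y := by
  rw [shMul, Finsupp.sum_single_index (by simp), shuffleLeft, Finsupp.lsum_apply]
  simp only [one_mul]
  rfl

theorem shuffleLeft_nil : shuffleLeft ([] : List V) = LinearMap.id :=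
  Finsupp.lhom_ext fun v d => by simp [shuffleLeft_single, shuffle]

theorem shuffleLeft_concat_appR (u : List V) (b c : V) (y : List V →₀ ℚ) :
    shuffleLeft (u ++ [b]) (appR c y) =
      appR c (shuffleLeft (u ++ [b]) y) + appR b (shuffleLeft u (appR c y)) := by
  induction y using Finsupp.induction_linear with
  | zero => simp [appR_zero]
  | add y z hy hz =>
    simp only [appR_add, map_add, hy, hz]
    abel
  | single v d =>
    simp only [appR_single, shuffleLeft_single, shuffle_concat_concat, smul_add, appR_smul]

theorem rho_singleton (a : V) : rho [a] = Finsupp.single [a] 1 := by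
  rw [rho]

theorem rho_cons_concat (d a : V) (s : List V) :
    rho (d :: (s ++ [a])) = appR a (rho (d :: s)) - appR d (rho (s ++ [a])) := by
  obtain ⟨b, l, hl⟩ := List.exists_cons_of_ne_nil (List.concat_ne_nil a s)
  rw [hl, rho]
  simp_rw [← hl, List.getLast_concat, List.dropLast_concat]

noncomputable def reeSum (u s : List V) : List V →₀ ℚ :=
  ∑ k ∈ Finset.range s.length, shuffleLeft (u ++ s.take k) (rho (s.drop k))

theorem reeSum_nil_right (u : List V) : reeSum u [] = 0 := by
  simp [reeSum]

theorem reeSum_cons (u : List V) (c : V) (s : List V) :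
    reeSum u (c :: s) = shuffleLeft u (rho (c :: s)) + reeSum (u ++ [c]) s := by
  rw [reeSum, List.length_cons, Finset.sum_range_succ', add_comm, reeSum]
  simp

theorem reeSum_concat_concat (u s : List V) (c a : V) :
    reeSum (u ++ [c]) (s ++ [a]) =
      appR a (reeSum (u ++ [c]) s) + Finsupp.single (u ++ [c] ++ s ++ [a]) 1
        + appR c (shuffleLeft u (rho (s ++ [a]))) := by
  induction s generalizing u c with
  | nil =>
    have hρ : rho [a] = appR a (Finsupp.single [] 1) := by rw [rho_singleton, appR_single]; rfl
    rw [List.nil_append, reeSum_cons, reeSum_nil_right, reeSum_nil_right, hρ,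
      shuffleLeft_concat_appR, shuffleLeft_single, shuffle_nil_right, appR_single]
    simp only [one_smul, appR_zero, zero_add, add_zero, appR_single, List.append_nil]
  | cons d s ih =>
    rw [List.cons_append, reeSum_cons, ih, reeSum_cons, rho_cons_concat, map_sub,
      shuffleLeft_concat_appR, shuffleLeft_concat_appR, map_sub]
    simp only [appR_add, appR_sub, List.append_assoc, List.cons_append, List.nil_append]
    abel

theorem reeSum_nil_concat (s : List V) (a : V) :
    reeSum [] (s ++ [a]) = appR a (reeSum [] s) + Finsupp.single (s ++ [a]) 1 := by
  cases s with
  | nil => simp [reeSum_cons, reeSum_nil_right, rho_singleton, shuffleLeft_nil, appR_zero]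
  | cons c s =>
    rw [List.cons_append, reeSum_cons, reeSum_concat_concat [] s c a,
      rho_cons_concat, reeSum_cons, shuffleLeft_nil]
    simp only [LinearMap.id_apply, appR_add, List.nil_append, List.cons_append]
    abel

end Ree

/-- Ree's identity: `w·(a₁⊗…⊗a_w) = ∑_{k=0}^{w-1} (a₁⊗…⊗a_k) ⧢ ρ_{w-k}(a_{k+1}⊗…⊗a_w)`,
where the `k = 0` term is `ρ_w(a₁⊗…⊗a_w)`. -/
theorem stmt_3 (V : Type*) (l : List V) :
    (l.length : ℚ) • Finsupp.single l (1 : ℚ) =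
      ∑ k ∈ Finset.range l.length,
        shMul (Finsupp.single (l.take k) (1 : ℚ)) (rho (l.drop k)) := by
  simp only [shMul_single_one]
  change _ = reeSum [] l
  induction l using List.reverseRecOn with
  | nil => simp [reeSum_nil_right]
  | append_singleton m a ih =>
    rw [reeSum_nil_concat, ← ih, appR_smul, appR_single, List.length_append, List.length_singleton,
      Nat.cast_succ, add_smul, one_smul]
end

section
/- For real x with 0 ≤ x < 1, G(−1,1;x) = −Li₂((1+x)/2) + log 2 · log(1+x) − (1/2) log² 2 + π²/12, where G(−1,1;x) = ∫₀ˣ dt/(t+1) · (−log(1−t)) is the weight-two iterated integral with singularities −1 and 1. -/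
/-!
Differentiating the right-hand side gives the integrand: `Li₂' z = -log (1 - z) / z` and
`log ((1 - t) / 2) = log (1 - t) - log 2`. So the identity reduces to its value at `x = 0`, which is
`Li₂ (1/2) = π²/12 - ½ log² 2`. That value comes from Euler's reflection formula
`Li₂ z + Li₂ (1 - z) + log z · log (1 - z) = π²/6`: the left side has derivative zero on `(0, 1)`
and is continuous at `0` with value `Li₂ 1`, and `Li₂ 1 = ζ(2)` by integrating the series
`-log (1 - t) / t = ∑ tⁿ / (n + 1)` term by term.
-/

open intervalIntegral Real

/-- The dilogarithm `Li₂(z) = ∑_{n≥1} zⁿ/n²`, here via `Li₂(z) = -∫₀^z log(1-t)/t dt`. -/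
noncomputable def Li2 (z : ℝ) : ℝ := -∫ t in (0:ℝ)..z, Real.log (1 - t) / t

open MeasureTheory Set Filter Topology

lemma neg_log_one_sub_le {t : ℝ} (ht : t < 1) : -log (1 - t) ≤ t / (1 - t) := by
  have h := one_sub_inv_le_log_of_pos (sub_pos.2 ht)
  have : t / (1 - t) = (1 - t)⁻¹ - 1 := by field_simp [(sub_pos.2 ht).ne']; ring
  linarith

lemma abs_log_one_sub_div_le {t : ℝ} (ht0 : 0 < t) (ht1 : t < 1) :
    |log (1 - t) / t| ≤ 1 - log (1 - t) := by
  have hlog : log (1 - t) ≤ 0 := log_nonpos (by linarith) (by linarith)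
  rw [abs_div, abs_of_nonpos hlog, abs_of_pos ht0, div_le_iff₀ ht0]
  have := neg_log_one_sub_le ht1
  rw [le_div_iff₀ (by linarith)] at this
  nlinarith

lemma integrableOn_log_one_sub_div : IntegrableOn (fun t => log (1 - t) / t) (Ioc 0 1) := by
  have hlog : IntegrableOn (fun t => 1 - log (1 - t)) (Ioc 0 1) := by
    have := (intervalIntegrable_log' (a := 0) (b := 1)).comp_sub_left 1
    simp only [sub_zero, sub_self] at this
    exact (intervalIntegrable_const.sub this.symm).1
  refine hlog.mono' (Measurable.aestronglyMeasurable (by fun_prop)) ?_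
  filter_upwards [ae_restrict_mem measurableSet_Ioc] with t ht
  rcases ht.2.lt_or_eq with ht1 | rfl
  · exact abs_log_one_sub_div_le ht.1 ht1
  · simp

lemma intervalIntegrable_log_one_sub_div {z : ℝ} (hz0 : 0 ≤ z) (hz1 : z ≤ 1) :
    IntervalIntegrable (fun t => log (1 - t) / t) volume 0 z :=
  (intervalIntegrable_iff_integrableOn_Ioc_of_le hz0).2
    (integrableOn_log_one_sub_div.mono_set (Ioc_subset_Ioc_right hz1))

lemma Li2_zero : Li2 0 = 0 := by simp [Li2]

lemma continuousOn_Li2 : ContinuousOn Li2 (Icc 0 1) := by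
  have h := continuousOn_primitive_interval (a := 0) (b := 1) (μ := volume)
    (f := fun t => log (1 - t) / t) <| by
      rw [uIcc_of_le zero_le_one, integrableOn_Icc_iff_integrableOn_Ioc]
      exact integrableOn_log_one_sub_div
  rw [uIcc_of_le zero_le_one] at h
  exact h.neg

lemma hasDerivAt_Li2 {z : ℝ} (hz0 : 0 < z) (hz1 : z < 1) :
    HasDerivAt Li2 (-log (1 - z) / z) z := by
  have hcont : ContinuousAt (fun t => log (1 - t) / t) z :=
    ((continuousAt_log (by linarith)).comp (by fun_prop)).div continuousAt_id hz0.ne'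
  rw [neg_div]
  exact (integral_hasDerivAt_right (intervalIntegrable_log_one_sub_div hz0.le hz1.le)
    (Measurable.stronglyMeasurable (by fun_prop)).stronglyMeasurableAtFilter hcont).neg

lemma hasSum_one_div_succ_sq : HasSum (fun n : ℕ => 1 / ((n : ℝ) + 1) ^ 2) (π ^ 2 / 6) := by
  simpa [one_div] using (hasSum_nat_add_iff' 1).mpr hasSum_zeta_two

lemma tsum_pow_div_succ {t : ℝ} (ht0 : 0 < t) (ht1 : t < 1) :
    ∑' n : ℕ, t ^ n / ((n : ℝ) + 1) = -(log (1 - t) / t) := by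
  have h := (hasSum_pow_div_log_of_abs_lt_one (by rwa [abs_of_pos ht0])).div_const t
  simp only [pow_succ, mul_div_right_comm, mul_div_cancel_right₀ _ ht0.ne'] at h
  rw [h.tsum_eq, neg_div]

lemma Li2_one : Li2 1 = π ^ 2 / 6 := by
  set F : ℕ → ℝ → ℝ := fun n t => t ^ n / ((n : ℝ) + 1)
  have hF_int (n : ℕ) : IntegrableOn (F n) (Ioo 0 1) :=
    (by fun_prop : Continuous (F n)).integrableOn_Icc.mono_set Ioo_subset_Icc_self
  have hF_integral (n : ℕ) : ∫ t in Ioo 0 1, F n t = 1 / ((n : ℝ) + 1) ^ 2 := by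
    rw [← integral_Ioc_eq_integral_Ioo, ← integral_of_le zero_le_one, intervalIntegral.integral_div,
      integral_pow]
    field_simp
    ring
  have hF_norm (n : ℕ) : ∫ t in Ioo 0 1, ‖F n t‖ = ∫ t in Ioo 0 1, F n t :=
    setIntegral_congr_fun measurableSet_Ioo fun t ht =>
      norm_of_nonneg (div_nonneg (pow_nonneg ht.1.le n) n.cast_add_one_pos.le)
  have hsum := hasSum_integral_of_summable_integral_norm hF_int
    (by simpa only [hF_norm, hF_integral] using hasSum_one_div_succ_sq.summable)
  simp only [hF_integral] at hsum
  rw [hasSum_one_div_succ_sq.unique hsum, setIntegral_congr_fun measurableSet_Ioo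
    fun t ht => tsum_pow_div_succ ht.1 ht.2, MeasureTheory.integral_neg, Li2,
    integral_of_le zero_le_one, integral_Ioc_eq_integral_Ioo]

lemma abs_log_mul_log_one_sub_le {y : ℝ} (hy0 : 0 ≤ y) (hy1 : y < 1) :
    |log y * log (1 - y)| ≤ |y * log y| / (1 - y) := by
  have h1y : 0 < 1 - y := by linarith
  have hlog : log (1 - y) ≤ 0 := log_nonpos h1y.le (by linarith)
  rw [abs_mul, abs_mul, abs_of_nonpos hlog, abs_of_nonneg hy0, le_div_iff₀ h1y]
  have := neg_log_one_sub_le hy1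
  rw [le_div_iff₀ h1y] at this
  nlinarith [abs_nonneg (log y)]

lemma continuousOn_log_mul_log_one_sub :
    ContinuousOn (fun y => log y * log (1 - y)) (Ico 0 1) := by
  intro y hy
  rcases hy.1.eq_or_lt with rfl | hy0
  · have hbound : Tendsto (fun y : ℝ => |y * log y| / (1 - y)) (𝓝 0) (𝓝 0) := by
      have : ContinuousAt (fun y : ℝ => |y * log y| / (1 - y)) 0 :=
        continuous_mul_log.abs.continuousAt.div (by fun_prop) (by norm_num)
      simpa using this.tendsto
    rw [ContinuousWithinAt, log_zero, zero_mul]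
    refine squeeze_zero_norm' ?_ (hbound.mono_left nhdsWithin_le_nhds)
    filter_upwards [self_mem_nhdsWithin] with y hy
    exact abs_log_mul_log_one_sub_le hy.1 hy.2
  · exact ((continuousAt_log hy0.ne').mul
      ((continuousAt_log (by linarith [hy.2])).comp (by fun_prop))).continuousWithinAt

lemma hasDerivAt_Li2_add_Li2_one_sub {z : ℝ} (hz0 : 0 < z) (hz1 : z < 1) :
    HasDerivAt (fun y => Li2 y + Li2 (1 - y) + log y * log (1 - y)) 0 z := by
  have h1z : 0 < 1 - z := by linarith
  have hsub : HasDerivAt (fun y : ℝ => 1 - y) (-1) z := (hasDerivAt_id z).const_sub 1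
  have hLi2_sub := (hasDerivAt_Li2 h1z (by linarith)).comp z hsub
  have hlog_sub := (hasDerivAt_log h1z.ne').comp z hsub
  refine (((hasDerivAt_Li2 hz0 hz1).add hLi2_sub).add
    ((hasDerivAt_log hz0.ne').mul hlog_sub)).congr_deriv ?_
  simp only [Function.comp_apply, sub_sub_cancel]
  field_simp
  ring

lemma Li2_add_Li2_one_sub {z : ℝ} (hz0 : 0 < z) (hz1 : z < 1) :
    Li2 z + Li2 (1 - z) + log z * log (1 - z) = π ^ 2 / 6 := by
  set ψ : ℝ → ℝ := fun y => Li2 y + Li2 (1 - y) + log y * log (1 - y)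
  have hψ_cont : ContinuousOn ψ (Icc 0 z) := by
    have hsub : MapsTo (fun y : ℝ => 1 - y) (Icc 0 z) (Icc 0 1) := fun y hy =>
      ⟨by linarith [hy.2], by linarith [hy.1]⟩
    have hz : Icc 0 z ⊆ Icc 0 1 := Icc_subset_Icc_right hz1.le
    exact ((continuousOn_Li2.mono hz).add (continuousOn_Li2.comp (by fun_prop) hsub)).add
      (continuousOn_log_mul_log_one_sub.mono (Icc_subset_Ico_right hz1))
  obtain ⟨c, hc, hslope⟩ := exists_hasDerivAt_eq_slope ψ (fun _ => 0) hz0 hψ_cont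
    fun c hc => hasDerivAt_Li2_add_Li2_one_sub hc.1 (hc.2.trans hz1)
  -- `log 0 = 0` in Lean, so `ψ 0 = Li2 1` and `ψ` is continuous at `0`
  have hψ0 : ψ 0 = π ^ 2 / 6 := by simp [ψ, Li2_zero, Li2_one]
  rw [eq_comm, div_eq_zero_iff, sub_eq_zero, hψ0] at hslope
  exact hslope.resolve_right (sub_ne_zero.2 hz0.ne')

lemma Li2_half : Li2 (1 / 2) = π ^ 2 / 12 - (1 / 2) * log 2 ^ 2 := by
  have h := Li2_add_Li2_one_sub (z := 1 / 2) (by norm_num) (by norm_num)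
  rw [show (1 : ℝ) - 1 / 2 = 1 / 2 by norm_num, one_div, log_inv] at h
  linarith

lemma hasDerivAt_neg_Li2_add_log_two_mul_log {y : ℝ} (hy0 : -1 < y) (hy1 : y < 1) :
    HasDerivAt (fun y => -Li2 ((1 + y) / 2) + log 2 * log (1 + y)) (log (1 - y) / (y + 1)) y := by
  have hmid : HasDerivAt (fun y : ℝ => (1 + y) / 2) (1 / 2) y :=
    ((hasDerivAt_id y).const_add 1).div_const 2
  have hLi2 := (hasDerivAt_Li2 (by linarith) (by linarith)).comp y hmid
  have hlog := (hasDerivAt_log (by linarith : 1 + y ≠ 0)).comp y ((hasDerivAt_id y).const_add 1)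
  refine (hLi2.neg.add (hlog.const_mul (log 2))).congr_deriv ?_
  rw [show 1 - (1 + y) / 2 = (1 - y) / 2 by ring, log_div (by linarith) two_ne_zero]
  field_simp
  ring

/-- For `0 ≤ x < 1`,
`G(−1,1;x) = ∫₀ˣ dt/(t+1) · log(1−t) = −Li₂((1+x)/2) + log 2 · log(1+x) − ½ log²2 + π²/12`. -/
theorem stmt_7 (x : ℝ) (h0 : 0 ≤ x) (h1 : x < 1) :
    (∫ t in (0:ℝ)..x, Real.log (1 - t) / (t + 1)) =
      -Li2 ((1 + x) / 2) + Real.log 2 * Real.log (1 + x)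
        - (1 / 2) * (Real.log 2) ^ 2 + Real.pi ^ 2 / 12 := by
  have hderiv : ∀ t ∈ uIcc 0 x, HasDerivAt (fun y => -Li2 ((1 + y) / 2) + log 2 * log (1 + y))
      (log (1 - t) / (t + 1)) t := by
    rw [uIcc_of_le h0]
    exact fun t ht =>
      hasDerivAt_neg_Li2_add_log_two_mul_log (by linarith [ht.1]) (by linarith [ht.2])
  have hcont : ContinuousOn (fun t => log (1 - t) / (t + 1)) (uIcc 0 x) := by
    rw [uIcc_of_le h0]
    exact ((continuousOn_log.comp (by fun_prop) fun t ht => by grind).div (by fun_prop))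
      fun t ht => by linarith [ht.1]
  rw [integral_eq_sub_of_hasDerivAt hderiv hcont.intervalIntegrable]
  norm_num [Li2_half]
  ring
end

section
/- The depth-two stuffle relation: for integers m₁, m₂ ≥ 2 and complex x, y with |x| < 1 and |y| < 1, Li_{m₁,m₂}(x,y) + Li_{m₂,m₁}(y,x) = Li_{m₁}(x)·Li_{m₂}(y) − Li_{m₁+m₂}(x·y). -/
/-! Both sides of the relation are pieces of the absolutely convergent double series
`∑_{n₁, n₂ ≥ 1} x^{n₁} y^{n₂} / (n₁^{m₁} n₂^{m₂}) = Li_{m₁}(x) Li_{m₂}(y)`: splitting the index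
set `ℕ × ℕ` into `n₁ < n₂`, `n₂ < n₁` and the diagonal `n₁ = n₂` gives `Li_{m₁,m₂}(x,y)`,
`Li_{m₂,m₁}(y,x)` and `Li_{m₁+m₂}(xy)`. -/

/-- The depth-two multiple polylogarithm
`Li_{m₁,m₂}(x,y) = ∑_{0 < n₁ < n₂} x^{n₁} y^{n₂} / (n₁^{m₁} n₂^{m₂})`. -/
noncomputable def Li2dep (m₁ m₂ : ℕ) (x y : ℂ) : ℂ :=
  ∑' p : ℕ × ℕ,
    if 0 < p.1 ∧ p.1 < p.2 then x ^ p.1 * y ^ p.2 / ((p.1 : ℂ) ^ m₁ * (p.2 : ℂ) ^ m₂) else 0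

/-- The classical polylogarithm `Li_m(z) = ∑_{n≥1} zⁿ/nᵐ`. -/
noncomputable def Li (m : ℕ) (z : ℂ) : ℂ :=
  ∑' n : ℕ, if 0 < n then z ^ n / (n : ℂ) ^ m else 0

section

variable {ι α : Type*} [LinearOrder ι] [NormedAddCommGroup α] [CompleteSpace α]

theorem tsum_prod_eq_add_add_tsum_diag {F : ι × ι → α} (hF : Summable F) :
    ∑' p, F p = (∑' p : ι × ι, if p.1 < p.2 then F p else 0)
      + (∑' p : ι × ι, if p.1 < p.2 then F p.swap else 0) + ∑' i, F (i, i) := by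
  have hsummable (r : ι → ι → Prop) [DecidableRel r] :
      Summable fun p : ι × ι => if r p.1 p.2 then F p else 0 := by
    refine (hF.indicator {p | r p.1 p.2}).congr fun p => ?_
    simp only [Set.indicator_apply, Set.mem_ofPred_eq]
  have hswap : ∑' p : ι × ι, (if p.1 < p.2 then F p.swap else 0)
      = ∑' p : ι × ι, if p.2 < p.1 then F p else 0 :=
    (Equiv.prodComm ι ι).tsum_eq fun p => if p.2 < p.1 then F p else 0
  have hdiag : ∑' i, F (i, i) = ∑' p : ι × ι, if p.1 = p.2 then F p else 0 := by
    rw [← Function.Injective.tsum_eq (g := fun i : ι => (i, i)) (fun i j h => congrArg Prod.fst h)]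
    · simp
    · intro p hp
      exact ⟨p.1, Prod.ext rfl (by_contra fun h => hp (if_neg h))⟩
  rw [hswap, hdiag, ← (hsummable (· < ·)).tsum_add (hsummable (· > ·)),
    ← ((hsummable (· < ·)).add (hsummable (· > ·))).tsum_add (hsummable (· = ·))]
  refine tsum_congr fun p => ?_
  rcases lt_trichotomy p.1 p.2 with h | h | h
  · simp [h, h.not_gt, h.ne]
  · simp [h]
  · simp [h, h.not_gt, h.ne']

theorem tsum_mul_tsum_eq_add_add_tsum_diag {R : Type*} [NormedRing R] [CompleteSpace R]
    {f g : ι → R} (hf : Summable fun i => ‖f i‖) (hg : Summable fun i => ‖g i‖) :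
    (∑' i, f i) * (∑' i, g i) = (∑' p : ι × ι, if p.1 < p.2 then f p.1 * g p.2 else 0)
      + (∑' p : ι × ι, if p.1 < p.2 then f p.2 * g p.1 else 0) + ∑' i, f i * g i := by
  rw [tsum_mul_tsum_of_summable_norm hf hg]
  exact tsum_prod_eq_add_add_tsum_diag (summable_mul_of_summable_norm hf hg)

end

noncomputable def polylogCoeff (m : ℕ) (z : ℂ) (n : ℕ) : ℂ :=
  if 0 < n then z ^ n / (n : ℂ) ^ m else 0

theorem Li_eq_tsum_polylogCoeff (m : ℕ) (z : ℂ) : Li m z = ∑' n, polylogCoeff m z n := rfl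

theorem norm_polylogCoeff_le (m : ℕ) (z : ℂ) (n : ℕ) : ‖polylogCoeff m z n‖ ≤ ‖z‖ ^ n := by
  unfold polylogCoeff
  split_ifs with hn
  · rw [norm_div, norm_pow, norm_pow, Complex.norm_natCast]
    exact div_le_self (by positivity) (one_le_pow₀ (mod_cast hn))
  · simp

theorem summable_norm_polylogCoeff (m : ℕ) {z : ℂ} (hz : ‖z‖ < 1) :
    Summable fun n => ‖polylogCoeff m z n‖ :=
  .of_nonneg_of_le (fun _ => norm_nonneg _) (norm_polylogCoeff_le m z)
    (summable_geometric_of_lt_one (norm_nonneg z) hz)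

theorem polylogCoeff_mul_polylogCoeff (m₁ m₂ : ℕ) (x y : ℂ) (n : ℕ) :
    polylogCoeff m₁ x n * polylogCoeff m₂ y n = polylogCoeff (m₁ + m₂) (x * y) n := by
  unfold polylogCoeff
  split_ifs
  · ring
  · simp

theorem Li2dep_eq_tsum_polylogCoeff (m₁ m₂ : ℕ) (x y : ℂ) :
    Li2dep m₁ m₂ x y =
      ∑' p : ℕ × ℕ, if p.1 < p.2 then polylogCoeff m₁ x p.1 * polylogCoeff m₂ y p.2 else 0 := by
  refine tsum_congr fun p => ?_
  unfold polylogCoeff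
  by_cases hlt : p.1 < p.2
  · rcases Nat.eq_zero_or_pos p.1 with h0 | hpos
    · simp [h0]
    · simp [hpos, hlt, hpos.trans hlt, div_mul_div_comm]
  · simp [hlt]

theorem stmt_10_general (m₁ m₂ : ℕ) (x y : ℂ)
    (hx : ‖x‖ < 1) (hy : ‖y‖ < 1) :
    Li2dep m₁ m₂ x y + Li2dep m₂ m₁ y x = Li m₁ x * Li m₂ y - Li (m₁ + m₂) (x * y) := by
  have hsplit := tsum_mul_tsum_eq_add_add_tsum_diag (summable_norm_polylogCoeff m₁ hx)
    (summable_norm_polylogCoeff m₂ hy)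
  simp only [polylogCoeff_mul_polylogCoeff] at hsplit
  rw [Li2dep_eq_tsum_polylogCoeff, Li2dep_eq_tsum_polylogCoeff, Li_eq_tsum_polylogCoeff,
    Li_eq_tsum_polylogCoeff, Li_eq_tsum_polylogCoeff, hsplit]
  simp only [mul_comm (polylogCoeff m₂ y _)]
  ring

/-- Depth-two stuffle relation: for `m₁, m₂ ≥ 2`, `|x| < 1`, `|y| < 1`,
`Li_{m₁,m₂}(x,y) + Li_{m₂,m₁}(y,x) = Li_{m₁}(x)·Li_{m₂}(y) − Li_{m₁+m₂}(x·y)`. -/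
theorem stmt_10 (m₁ m₂ : ℕ) (h₁ : 2 ≤ m₁) (h₂ : 2 ≤ m₂) (x y : ℂ)
    (hx : ‖x‖ < 1) (hy : ‖y‖ < 1) :
    Li2dep m₁ m₂ x y + Li2dep m₂ m₁ y x = Li m₁ x * Li m₂ y - Li (m₁ + m₂) (x * y) :=
  stmt_10_general m₁ m₂ x y hx hy
end
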